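/- Principal blow-ups at seam points for smooth first-layer norms are piecewise-linear with two partial functions: let N be a norm on ℝⁿ × ℝⁿ, λ > 0, σ ∈ {1, −1}, and let p = (a, b, σ/λ²) with N(a,b) = 1 (a seam point of the unit sphere). If N is Fréchet differentiable at (a,b) with derivative D, then for every q = (x,y,z) ∈ H_{2n+1}(ℝ), lim_{t→0⁺} (‖p·δ_t q‖ − 1)/t = max( D(x,y), σ·(λ²/4)·(a⋅y − b⋅x) ). -/

import Mathlib

open Filter Metric Real

noncomputable section

/-- The higher Heisenberg group `H_{2n+1}(ℝ)` as `ℝⁿ × ℝⁿ × ℝ`. -/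
abbrev Heis (n : ℕ) := (Fin n → ℝ) × (Fin n → ℝ) × ℝ

/-- Standard inner product on `ℝⁿ`. -/
def dotR {n : ℕ} (x y : Fin n → ℝ) : ℝ := ∑ i, x i * y i

/-- Heisenberg group product. -/
def Hmul {n : ℕ} (p q : Heis n) : Heis n :=
  (p.1 + q.1, p.2.1 + q.2.1,
    p.2.2 + q.2.2 + (1 / 2) * (dotR p.1 q.2.1 - dotR q.1 p.2.1))

/-- Heisenberg dilations `δ_t(x,y,z) = (tx, ty, t²z)`. -/
def Hdil {n : ℕ} (t : ℝ) (p : Heis n) : Heis n :=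
  (t • p.1, t • p.2.1, t ^ 2 * p.2.2)

/-- The layered sup quasi-norm `max(N(x,y), λ√|z|)`. -/
def layeredNorm {n : ℕ} (N : (Fin n → ℝ) × (Fin n → ℝ) → ℝ) (lam : ℝ) (p : Heis n) : ℝ :=
  max (N (p.1, p.2.1)) (lam * Real.sqrt |p.2.2|)

open Topology

/-!
Along `t ↦ p · δ_t q` the first layer moves on the line `(a, b) + t • (x, y)`, while the
centre coordinate is `σ/λ² + t (a⋅y − b⋅x)/2 + t² z`, which keeps the sign of `σ` for small `t`.
Both layers of the quasi-norm equal `1` at `t = 0`, so the right derivative of their maximum is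
the maximum of their derivatives: `D (x, y)` for the first layer and, by the chain rule for
`λ √|·|` at `σ/λ²`, `σ λ²/4 (a⋅y − b⋅x)` for the second.
-/

-- Dividing by `t > 0` commutes with `max`; from the left one would get `min f' g'` instead.
theorem tendsto_slope_max_nhdsGT {f g : ℝ → ℝ} {f' g' c x : ℝ}
    (hf : HasDerivAt f f' x) (hg : HasDerivAt g g' x) (hfx : f x = c) (hgx : g x = c) :
    Tendsto (fun t => (max (f (x + t)) (g (x + t)) - c) / t) (𝓝[>] 0) (𝓝 (max f' g')) := by
  refine (hf.tendsto_slope_zero_right.max hg.tendsto_slope_zero_right).congr' ?_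
  filter_upwards [self_mem_nhdsWithin] with t (ht : 0 < t)
  rw [hfx, hgx, smul_eq_mul, smul_eq_mul, ← mul_max_of_nonneg _ _ (inv_nonneg.2 ht.le),
    max_sub_sub_right, inv_mul_eq_div]

theorem sqrt_abs_div_sq {lam σ : ℝ} (hlam : 0 < lam) (hσ : σ = 1 ∨ σ = -1) :
    √|σ / lam ^ 2| = lam⁻¹ := by
  have hσ_abs : |σ| = 1 := by rcases hσ with rfl | rfl <;> simp
  rw [abs_div, hσ_abs, abs_pow, abs_of_pos hlam, one_div, sqrt_inv, sqrt_sq hlam.le]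

theorem HasDerivAt.mul_sqrt_abs {h : ℝ → ℝ} {h' lam σ x : ℝ} (hlam : 0 < lam)
    (hσ : σ = 1 ∨ σ = -1) (hh : HasDerivAt h h' x) (hhx : h x = σ / lam ^ 2) :
    HasDerivAt (fun t => lam * √|h t|) (σ * lam ^ 2 / 2 * h') x := by
  have hsign : (SignType.sign (h x) : ℝ) = σ := by
    rw [hhx]
    rcases hσ with rfl | rfl
    · rw [sign_pos (by positivity)]
      simp
    · rw [sign_neg (div_neg_of_neg_of_pos neg_one_lt_zero (by positivity))]
      simp
  have hhx_ne : h x ≠ 0 := by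
    rw [hhx]
    rcases hσ with rfl | rfl <;> positivity
  have habs : HasDerivAt (fun t => |h t|) (SignType.sign (h x) * h') x :=
    (hasDerivAt_abs hhx_ne).comp x hh
  convert! ((habs.sqrt (abs_ne_zero.2 hhx_ne)).const_mul lam) using 1
  rw [hsign, hhx, sqrt_abs_div_sq hlam hσ]
  field_simp

theorem dotR_comm {n : ℕ} (x y : Fin n → ℝ) : dotR x y = dotR y x := by
  simp only [dotR, mul_comm]

theorem dotR_smul_left {n : ℕ} (t : ℝ) (x y : Fin n → ℝ) : dotR (t • x) y = t * dotR x y := by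
  simp only [dotR, Pi.smul_apply, smul_eq_mul, Finset.mul_sum, mul_assoc]

theorem dotR_smul_right {n : ℕ} (t : ℝ) (x y : Fin n → ℝ) : dotR x (t • y) = t * dotR x y := by
  rw [dotR_comm, dotR_smul_left, dotR_comm]

theorem layeredNorm_Hmul_Hdil {n : ℕ} (N : (Fin n → ℝ) × (Fin n → ℝ) → ℝ) (lam w t : ℝ)
    (a b x y : Fin n → ℝ) (z : ℝ) :
    layeredNorm N lam (Hmul (a, b, w) (Hdil t (x, y, z))) =
      max (N ((a, b) + t • (x, y)))
        (lam * √|w + t ^ 2 * z + t * (1 / 2 * (dotR a y - dotR b x))|) := by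
  simp only [layeredNorm, Hmul, Hdil, dotR_smul_left, dotR_smul_right, dotR_comm x b,
    Prod.mk_add_mk, Prod.smul_mk]
  ring_nf

theorem blowup_seam_smooth_general (n : ℕ) (N : (Fin n → ℝ) × (Fin n → ℝ) → ℝ)
    (lam : ℝ) (hlam : 0 < lam) (σ : ℝ) (hσ : σ = 1 ∨ σ = -1)
    (a b : Fin n → ℝ) (hab : N (a, b) = 1)
    (D : ((Fin n → ℝ) × (Fin n → ℝ)) →L[ℝ] ℝ) (hD : HasFDerivAt N D (a, b))
    (x y : Fin n → ℝ) (z : ℝ) :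
    Tendsto
      (fun t : ℝ =>
        (layeredNorm N lam (Hmul (a, b, σ / lam ^ 2) (Hdil t (x, y, z))) - 1) / t)
      (nhdsWithin 0 (Set.Ioi 0))
      (nhds (max (D (x, y)) (σ * (lam ^ 2 / 4) * (dotR a y - dotR b x)))) := by
  set c := 1 / 2 * (dotR a y - dotR b x)
  have horizontal : HasDerivAt (fun t : ℝ => N ((a, b) + t • (x, y))) (D (x, y)) 0 :=
    hD.hasLineDerivAt (x, y)
  have center : HasDerivAt (fun t : ℝ => σ / lam ^ 2 + t ^ 2 * z + t * c) c 0 := by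
    refine (((hasDerivAt_pow 2 (0 : ℝ)).mul_const z).const_add (σ / lam ^ 2)).add
      ((hasDerivAt_id (0 : ℝ)).mul_const c) |>.congr_deriv ?_
    simp
  have vertical := center.mul_sqrt_abs hlam hσ (by simp)
  have key := tendsto_slope_max_nhdsGT horizontal vertical (by simpa using hab)
    (by simp [sqrt_abs_div_sq hlam hσ, hlam.ne'])
  simp only [zero_add] at key
  convert key using 3
  · rw [layeredNorm_Hmul_Hdil]
  · ring

/-- **Principal blow-ups at seam points for smooth first-layer norms.** At a seam point
`p = (a, b, σ/λ²)` with `N(a,b) = 1`, if `N` is Fréchet differentiable at `(a,b)` with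
derivative `D`, then the principal blow-up is the piecewise-linear function
`max(D(x,y), σ·(λ²/4)·(a⋅y − b⋅x))`. -/
theorem blowup_seam_smooth (n : ℕ) (N : (Fin n → ℝ) × (Fin n → ℝ) → ℝ)
    (hN_add : ∀ u v, N (u + v) ≤ N u + N v)
    (hN_smul : ∀ (c : ℝ) u, N (c • u) = |c| * N u)
    (hN_zero : ∀ u, N u = 0 ↔ u = 0)
    (lam : ℝ) (hlam : 0 < lam) (σ : ℝ) (hσ : σ = 1 ∨ σ = -1)
    (a b : Fin n → ℝ) (hab : N (a, b) = 1)
    (D : ((Fin n → ℝ) × (Fin n → ℝ)) →L[ℝ] ℝ) (hD : HasFDerivAt N D (a, b))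
    (x y : Fin n → ℝ) (z : ℝ) :
    Tendsto
      (fun t : ℝ =>
        (layeredNorm N lam (Hmul (a, b, σ / lam ^ 2) (Hdil t (x, y, z))) - 1) / t)
      (nhdsWithin 0 (Set.Ioi 0))
      (nhds (max (D (x, y)) (σ * (lam ^ 2 / 4) * (dotR a y - dotR b x)))) :=
  blowup_seam_smooth_general n N lam hlam σ hσ a b hab D hD x y z
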